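/- (Exact (FTP, FSP) schedulability test) For any preemptive hierarchical (FTP, FSP) scheduler A and any asynchronous constrained-deadline parallel task system τ = {τ_1, ..., τ_n} on m unit-capacity processors, [0, S_n + P) is a feasibility interval for A, where S_n is defined by the recurrence S_1 = O_1, S_i = max{O_i, O_i + ⌈(S_{i-1} − O_i)/T_i⌉·T_i}, and P = lcm(T_1,...,T_n). -/
import Mathlib

namespace HierTest

def Snat (O T : ℕ → ℕ) : ℕ → ℕ
  | 0 => O 0
  | i + 1 => O (i + 1) + (Snat O T i - O (i + 1) + T (i + 1) - 1) / T (i + 1) * T (i + 1)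

abbrev Thread := ℕ × ℕ × ℕ

def work (σ : ℕ → Finset Thread) (th : Thread) (t : ℕ) : ℕ :=
  ((Finset.range t).filter (fun s => th ∈ σ s)).card

def active (n : ℕ) (v : ℕ → ℕ) (O T : ℕ → ℕ) (exec : Thread → ℕ)
    (σ : ℕ → Finset Thread) (th : Thread) (t : ℕ) : Prop :=
  th.1 < n ∧ th.2.1 < v th.1 ∧ O th.1 + th.2.2 * T th.1 ≤ t ∧
    work σ th t < exec th

def hierHp (th' th : Thread) : Prop :=
  th'.1 < th.1 ∨ (th'.1 = th.1 ∧ (th'.2.1 < th.2.1 ∨ (th'.2.1 = th.2.1 ∧ th'.2.2 < th.2.2)))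

def isHierSchedule (n m : ℕ) (v : ℕ → ℕ) (O T : ℕ → ℕ) (exec : Thread → ℕ)
    (σ : ℕ → Finset Thread) : Prop :=
  ∀ t : ℕ,
    (σ t).card ≤ m ∧
    (∀ th ∈ σ t, active n v O T exec σ th t) ∧
    (∀ th : Thread, active n v O T exec σ th t → th ∉ σ t →
      (σ t).card = m ∧ ∀ th' ∈ σ t, hierHp th' th)

/-- Shift a thread by one hyperperiod. -/
def shiftT (P : ℕ) (T : ℕ → ℕ) (th : Thread) : Thread :=
  (th.1, th.2.1, th.2.2 + P / T th.1)

lemma hierHp_asymm {a b : Thread} (h1 : hierHp a b) (h2 : hierHp b a) : False := by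
  obtain ⟨a1, a2, a3⟩ := a; obtain ⟨b1, b2, b3⟩ := b
  simp only [hierHp] at h1 h2; omega

lemma hierHp_shift {P : ℕ} {T : ℕ → ℕ} {a b : Thread} (h : hierHp a b) :
    hierHp (shiftT P T a) (shiftT P T b) := by
  obtain ⟨a1, a2, a3⟩ := a; obtain ⟨b1, b2, b3⟩ := b
  simp only [hierHp, shiftT] at h ⊢
  rcases h with h | ⟨rfl, h⟩
  · exact Or.inl h
  rcases h with h | ⟨rfl, h⟩
  · exact Or.inr ⟨rfl, Or.inl h⟩
  · exact Or.inr ⟨rfl, Or.inr ⟨rfl, by omega⟩⟩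

lemma shiftT_injective (P : ℕ) (T : ℕ → ℕ) : Function.Injective (shiftT P T) := by
  rintro ⟨a1, a2, a3⟩ ⟨b1, b2, b3⟩ h
  simp only [shiftT, Prod.mk.injEq] at h
  obtain ⟨rfl, rfl, h3⟩ := h
  generalize P / T a1 = X at h3
  obtain rfl : a3 = b3 := by omega
  rfl

lemma work_mono (σ : ℕ → Finset Thread) (th : Thread) {s t : ℕ} (h : s ≤ t) :
    work σ th s ≤ work σ th t :=
  Finset.card_le_card (Finset.filter_subset_filter _ (by
    intro x hx; simp only [Finset.mem_range] at *; omega))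

lemma work_succ (σ : ℕ → Finset Thread) (th : Thread) (t : ℕ) :
    work σ th (t + 1) = work σ th t + if th ∈ σ t then 1 else 0 := by
  unfold work
  rw [Finset.range_add_one, Finset.filter_insert]
  by_cases h : th ∈ σ t
  · simp only [h, if_true]
    rw [Finset.card_insert_of_notMem (by simp)]
  · simp [h]

lemma notmem_of_lt_arrival {n m : ℕ} {v O T : ℕ → ℕ} {exec : Thread → ℕ}
    {σ : ℕ → Finset Thread} (hσ : isHierSchedule n m v O T exec σ)
    {th : Thread} {u : ℕ} (h : u < O th.1 + th.2.2 * T th.1) : th ∉ σ u :=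
  fun hm => absurd ((hσ u).2.1 th hm).2.2.1 (by omega)

lemma mem_sched_iff {n m : ℕ} {v O T : ℕ → ℕ} {exec : Thread → ℕ} {σ : ℕ → Finset Thread}
    (hσ : isHierSchedule n m v O T exec σ) (t : ℕ) (th : Thread) :
    th ∈ σ t ↔ active n v O T exec σ th t ∧
      ¬ ∃ s : Finset Thread, (∀ x ∈ s, hierHp x th ∧ active n v O T exec σ x t) ∧ m ≤ s.card := by
  obtain ⟨hcard, hact, hfull⟩ := hσ t
  constructor
  · intro hmem
    refine ⟨hact th hmem, ?_⟩
    rintro ⟨s, hs, hm⟩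
    have hsub : s ⊆ (σ t).erase th := by
      intro x hx
      obtain ⟨hp, ha⟩ := hs x hx
      have hxm : x ∈ σ t := by
        by_contra hxn
        exact hierHp_asymm hp ((hfull x ha hxn).2 th hmem)
      exact Finset.mem_erase.2 ⟨fun h => hierHp_asymm (h ▸ hp) (h ▸ hp), hxm⟩
    have h1 := Finset.card_le_card hsub
    have h2 := Finset.card_erase_of_mem hmem
    have h3 : 0 < (σ t).card := Finset.card_pos.2 ⟨th, hmem⟩
    omega
  · rintro ⟨ha, hns⟩
    by_contra hmem
    obtain ⟨hc, hall⟩ := hfull th ha hmem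
    exact hns ⟨σ t, fun x hx => ⟨hall x hx, hact x hx⟩, le_of_eq hc.symm⟩

lemma work_le {n m : ℕ} {v O T : ℕ → ℕ} {exec : Thread → ℕ} {σ : ℕ → Finset Thread}
    (hσ : isHierSchedule n m v O T exec σ) (th : Thread) :
    ∀ t, work σ th t ≤ exec th := by
  intro t
  induction t with
  | zero => simp [work]
  | succ t ih =>
    rw [work_succ]
    by_cases h : th ∈ σ t
    · have := ((hσ t).2.1 th h).2.2.2
      simp only [h, if_true]; omega
    · simp only [h, if_false]; omega

lemma predictable {n m : ℕ} {v O T : ℕ → ℕ} {C : ℕ → ℕ → ℕ} {c : Thread → ℕ}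
    {σ σ' : ℕ → Finset Thread}
    (hσ : isHierSchedule n m v O T (fun th => C th.1 th.2.1) σ)
    (hσ' : isHierSchedule n m v O T c σ')
    (hc : ∀ th, c th ≤ C th.1 th.2.1) :
    ∀ t th, min (c th) (work σ th t) ≤ work σ' th t := by
  intro t
  induction t with
  | zero => intro th; simp [work]
  | succ t ih =>
    intro th
    by_cases hfin : c th ≤ work σ' th t
    · have h1 := work_mono σ' th (show t ≤ t + 1 by omega)
      exact le_trans (min_le_left _ _) (by omega)
    push_neg at hfin
    have hw : work σ th t ≤ work σ' th t := by
      have h := ih th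
      rcases min_cases (c th) (work σ th t) with ⟨he, _⟩ | ⟨he, _⟩ <;> omega
    rw [work_succ, work_succ]
    by_cases hm : th ∈ σ t
    · have hact := (hσ t).2.1 th hm
      have hact' : active n v O T c σ' th t := ⟨hact.1, hact.2.1, hact.2.2.1, hfin⟩
      by_cases hm' : th ∈ σ' t
      · simp only [hm, hm', if_true]
        exact le_trans (min_le_right _ _) (by omega)
      · exfalso
        obtain ⟨hcard', hall'⟩ := (hσ' t).2.2 th hact' hm'
        have hsub : σ' t ⊆ σ t := by
          intro x hx
          have hax' := (hσ' t).2.1 x hx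
          have hxw : work σ x t ≤ work σ' x t := by
            have h := ih x
            have h2 := hax'.2.2.2
            rcases min_cases (c x) (work σ x t) with ⟨he, _⟩ | ⟨he, _⟩ <;> omega
          have hax : active n v O T (fun th => C th.1 th.2.1) σ x t :=
            ⟨hax'.1, hax'.2.1, hax'.2.2.1,
              lt_of_le_of_lt hxw (lt_of_lt_of_le hax'.2.2.2 (hc x))⟩
          by_contra hxn
          exact hierHp_asymm (hall' x hx) (((hσ t).2.2 x hax hxn).2 th hm)
        have hins : insert th (σ' t) ⊆ σ t := Finset.insert_subset hm hsub
        have h1 := Finset.card_le_card hins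
        rw [Finset.card_insert_of_notMem hm'] at h1
        have h2 := (hσ t).1
        omega
    · simp only [hm, if_false]
      have h := ih th
      split <;> (rcases min_cases (c th) (work σ th t) with ⟨he, _⟩ | ⟨he, _⟩ <;> omega)

lemma work_shift {n m : ℕ} {v O T : ℕ → ℕ} {exec : Thread → ℕ} {σ : ℕ → Finset Thread}
    (hσ : isHierSchedule n m v O T exec σ) (P : ℕ) (th : Thread) (t : ℕ)
    (hdvd : T th.1 ∣ P)
    (hiff : ∀ u, u < t → (th ∈ σ u ↔ shiftT P T th ∈ σ (u + P))) :
    work σ (shiftT P T th) (t + P) = work σ th t := by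
  have hPT : P / T th.1 * T th.1 = P := Nat.div_mul_cancel hdvd
  have himg : Finset.filter (fun s => shiftT P T th ∈ σ s) (Finset.range (t + P))
      = (Finset.filter (fun s => th ∈ σ s) (Finset.range t)).image (· + P) := by
    ext a
    simp only [Finset.mem_filter, Finset.mem_range, Finset.mem_image]
    constructor
    · rintro ⟨hlt, hmem⟩
      have harr := ((hσ a).2.1 _ hmem).2.2.1
      simp only [shiftT] at harr
      rw [add_mul, hPT] at harr
      have hPle : P ≤ a := by omega
      refine ⟨a - P, ⟨by omega, ?_⟩, by omega⟩
      refine (hiff (a - P) (by omega)).2 ?_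
      rw [Nat.sub_add_cancel hPle]
      exact hmem
    · rintro ⟨b, ⟨hb, hmem⟩, rfl⟩
      exact ⟨by omega, (hiff b hb).1 hmem⟩
  unfold work
  rw [himg, Finset.card_image_of_injective _ (add_left_injective P)]

lemma ceil_mul_le (a : ℕ) {T : ℕ} (hT : 0 < T) : a ≤ (a + T - 1) / T * T := by
  generalize hq : (a + T - 1) / T = q
  have h1 : T * q + (a + T - 1) % T = a + T - 1 := by rw [← hq]; exact Nat.div_add_mod _ _
  have h2 := Nat.mod_lt (a + T - 1) hT
  have h3 : T * q = q * T := Nat.mul_comm _ _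
  generalize q * T = X at h1 h3 ⊢
  omega

lemma Snat_arr (O T : ℕ → ℕ) : ∀ i, ∃ q, Snat O T i = O i + q * T i
  | 0 => ⟨0, by simp [Snat]⟩
  | i + 1 => ⟨_, rfl⟩

lemma O_le_Snat (O T : ℕ → ℕ) : ∀ i, O i ≤ Snat O T i
  | 0 => le_refl _
  | i + 1 => Nat.le_add_right _ _

lemma Snat_mono (O T : ℕ → ℕ) : ∀ {i j : ℕ}, i ≤ j → (∀ k, k ≤ j → 0 < T k) →
    Snat O T i ≤ Snat O T j := by
  intro i j hij hT
  induction j with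
  | zero => interval_cases i; exact le_refl _
  | succ j ih =>
    rcases Nat.lt_succ_iff_lt_or_eq.mp (Nat.lt_succ_of_le hij) with h | rfl
    · have h1 : Snat O T i ≤ Snat O T j := ih (by omega) (fun k hk => hT k (by omega))
      have h2 : Snat O T j ≤ Snat O T (j + 1) := by
        show Snat O T j ≤ O (j + 1) + _
        by_cases hle : Snat O T j ≤ O (j + 1)
        · exact le_trans hle (Nat.le_add_right _ _)
        · have := ceil_mul_le (Snat O T j - O (j + 1)) (hT (j + 1) le_rfl)
          omega
      omega
    · exact le_refl _

/-- compare two arrival-type points of the same task -/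
lemma arr_step {Oi Ti a b : ℕ} (hT : 0 < Ti) (ha : ∃ k, a = Oi + k * Ti)
    (hb : ∃ k, b = Oi + k * Ti) (h : a < b) : a + Ti ≤ b := by
  obtain ⟨k, rfl⟩ := ha; obtain ⟨l, rfl⟩ := hb
  have hkl : k < l := by
    by_contra hh
    push_neg at hh
    have := Nat.mul_le_mul_right Ti hh
    omega
  have h2 : (k + 1) * Ti ≤ l * Ti := Nat.mul_le_mul_right Ti hkl
  have h3 : (k + 1) * Ti = k * Ti + Ti := by ring
  omega

/-- **Exact (FTP, FSP) schedulability test.**  For any asynchronous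
constrained-deadline parallel task system `τ = {τ_1, …, τ_n}` on `m`
unit-capacity processors, `[0, S_n + P)` is a feasibility interval for any
preemptive hierarchical (FTP, FSP) scheduler: if the schedule with worst-case
execution times `C` misses no deadline of the processes in `[0, S_n + P)`, then
no deadline is ever missed, for any actual execution times never exceeding the
worst case. -/
theorem exact_hier_schedulability_test
    (n m : ℕ) (hn : 0 < n) (v O D T : ℕ → ℕ) (C : ℕ → ℕ → ℕ)
    (hT : ∀ i < n, 0 < T i) (hD : ∀ i < n, D i ≤ T i)
    (P : ℕ) (hP : P = (Finset.range n).lcm T)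
    -- the worst-case schedule
    (σ : ℕ → Finset Thread)
    (hσ : isHierSchedule n m v O T (fun th => C th.1 th.2.1) σ)
    -- no deadline missed in the feasibility interval `[0, S_n + P)`
    (hok : ∀ th : Thread, th.1 < n → th.2.1 < v th.1 →
      O th.1 + th.2.2 * T th.1 + D th.1 ≤ Snat O T (n - 1) + P →
      work σ th (O th.1 + th.2.2 * T th.1 + D th.1) = C th.1 th.2.1) :
    -- then no deadline is ever missed, for any actual execution times `≤ C`
    ∀ (c : Thread → ℕ), (∀ th : Thread, c th ≤ C th.1 th.2.1) →
      ∀ (σ' : ℕ → Finset Thread), isHierSchedule n m v O T c σ' →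
        ∀ th : Thread, th.1 < n → th.2.1 < v th.1 →
          work σ' th (O th.1 + th.2.2 * T th.1 + D th.1) = c th := by
  intro c hc σ' hσ' th0 h01 h02
  have hdvdP : ∀ i, i < n → T i ∣ P := fun i hi => hP ▸ Finset.dvd_lcm (Finset.mem_range.2 hi)
  have hPpos : 0 < P := by
    rcases Nat.eq_zero_or_pos P with h | h
    · exfalso
      rw [hP, Finset.lcm_eq_zero_iff] at h
      simp only [Set.mem_image, Finset.mem_coe, Finset.mem_range] at h
      obtain ⟨i, hi, h0⟩ := h
      exact absurd h0 (by have := hT i hi; omega)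
    · exact h
  have IND : ∀ t : ℕ,
      (∀ th : Thread, th.1 < n → th.2.1 < v th.1 →
          O th.1 + th.2.2 * T th.1 + D th.1 ≤ t + P →
          work σ th (O th.1 + th.2.2 * T th.1 + D th.1) = C th.1 th.2.1) ∧
      (∀ th : Thread, th.1 < n → th.2.1 < v th.1 →
          Snat O T th.1 ≤ O th.1 + th.2.2 * T th.1 →
          (th ∈ σ t ↔ shiftT P T th ∈ σ (t + P))) := by
    intro t
    induction t using Nat.strong_induction_on with
    | _ t IH =>
    have hB : ∀ th : Thread, th.1 < n → th.2.1 < v th.1 →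
        O th.1 + th.2.2 * T th.1 + D th.1 ≤ t + P →
        work σ th (O th.1 + th.2.2 * T th.1 + D th.1) = C th.1 th.2.1 := by
      rintro ⟨i, jj, k⟩ h1 h2 hd
      dsimp only at h1 h2 hd ⊢
      by_cases hcase : O i + k * T i + D i ≤ Snat O T (n - 1) + P
      · exact hok (i, jj, k) h1 h2 hcase
      push_neg at hcase
      obtain ⟨q, hq⟩ := Snat_arr O T i
      obtain ⟨p, hp'⟩ := hdvdP i h1
      have hT1 : 0 < T i := hT i h1
      have hPT : P / T i = p := by rw [hp']; exact Nat.mul_div_cancel_left p hT1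
      have hSle : Snat O T i ≤ Snat O T (n - 1) :=
        Snat_mono O T (by omega) (fun kk hk => hT kk (by omega))
      have hDle : D i ≤ T i := hD i h1
      have hq2 : Snat O T i + P = O i + (q + p) * T i := by rw [hq, hp']; ring
      have hk : q + p ≤ k := by
        by_contra hh
        push_neg at hh
        have hstep : O i + k * T i + T i ≤ Snat O T i + P := by
          refine arr_step hT1 ⟨k, rfl⟩ ⟨q + p, hq2⟩ ?_
          have h5 := Nat.mul_le_mul_right (T i) (show k + 1 ≤ q + p by omega)
          have h6 : (k + 1) * T i = k * T i + T i := by ring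
          rw [hq2]; omega
        omega
      have hkp : p ≤ k := by omega
      have hsub : (k - p) * T i = k * T i - p * T i := Nat.sub_mul k p (T i)
      have hpT : p * T i = P := by rw [hp']; ring
      have harr0 : Snat O T i ≤ O i + (k - p) * T i := by
        rw [hq]
        have h7 : q * T i ≤ (k - p) * T i := Nat.mul_le_mul_right (T i) (by omega)
        omega
      have harrP : P ≤ O i + k * T i := by
        have h8 := Nat.mul_le_mul_right (T i) hkp
        omega
      have ht0 : 1 ≤ t := by
        by_contra hh
        push_neg at hh
        have hS0 : 0 ≤ Snat O T (n - 1) := Nat.zero_le _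
        omega
      have hiff : ∀ u, u < O i + k * T i + D i - P →
          ((i, jj, k - p) ∈ σ u ↔ shiftT P T (i, jj, k - p) ∈ σ (u + P)) := by
        intro u hu
        exact (IH u (by omega)).2 (i, jj, k - p) h1 h2 harr0
      have hws := work_shift hσ P (i, jj, k - p) (O i + k * T i + D i - P) (hdvdP i h1) hiff
      have hsh : shiftT P T (i, jj, k - p) = (i, jj, k) := by
        simp only [shiftT]
        have h9 : k - p + P / T i = k := by rw [hPT]; omega
        rw [h9]
      rw [hsh] at hws
      have hdP' : O i + k * T i + D i - P + P = O i + k * T i + D i := by omega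
      rw [hdP'] at hws
      have hdl0 : O i + (k - p) * T i + D i = O i + k * T i + D i - P := by
        have hmul : p * T i ≤ k * T i := Nat.mul_le_mul_right (T i) hkp
        rw [hsub]; omega
      have hB0 := (IH (t - 1) (by omega)).1 (i, jj, k - p) h1 h2 (by
        dsimp only
        rw [hdl0]; omega)
      dsimp only at hB0
      rw [hdl0] at hB0
      rw [hws]
      exact hB0
    refine ⟨hB, ?_⟩
    rintro ⟨i, jj, k⟩ h1 h2 hSarr
    dsimp only at h1 h2 hSarr
    obtain ⟨p, hp'⟩ := hdvdP i h1
    have hT1 : 0 < T i := hT i h1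
    have hPT : P / T i = p := by rw [hp']; exact Nat.mul_div_cancel_left p hT1
    have hpT : p * T i = P := by rw [hp']; ring
    have hshift_arr : (k + P / T i) * T i = k * T i + P := by
      rw [hPT, add_mul, hpT]
    by_cases harr : O i + k * T i ≤ t
    case neg =>
      push_neg at harr
      constructor
      · intro h
        exact absurd h (notmem_of_lt_arrival hσ (show t < O i + k * T i by omega))
      · intro h
        refine absurd h (notmem_of_lt_arrival hσ ?_)
        show t + P < O i + (k + P / T i) * T i
        rw [hshift_arr]; omega
    case pos =>
    have hweq : work σ (shiftT P T (i, jj, k)) (t + P) = work σ (i, jj, k) t :=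
      work_shift hσ P _ t (hdvdP i h1) (fun u hu => (IH u hu).2 _ h1 h2 hSarr)
    have hactiff : active n v O T (fun th => C th.1 th.2.1) σ (i, jj, k) t ↔
        active n v O T (fun th => C th.1 th.2.1) σ (shiftT P T (i, jj, k)) (t + P) := by
      unfold active
      simp only [shiftT] at hweq ⊢
      rw [hweq, hshift_arr]
      constructor <;> rintro ⟨x1, x2, x3, x4⟩ <;> exact ⟨x1, x2, by omega, x4⟩
    rw [mem_sched_iff hσ, mem_sched_iff hσ]
    refine and_congr hactiff (not_congr ⟨?_, ?_⟩)
    · rintro ⟨s, hs, hcard⟩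
      have key : ∀ y ∈ s, hierHp (shiftT P T y) (shiftT P T (i, jj, k)) ∧
          active n v O T (fun th => C th.1 th.2.1) σ (shiftT P T y) (t + P) := by
        rintro ⟨y1, y2, y3⟩ hy
        obtain ⟨hyp, hya⟩ := hs _ hy
        have hy1 : y1 < n := hya.1
        have hy2 : y2 < v y1 := hya.2.1
        have hyT : 0 < T y1 := hT y1 hy1
        have hyi : y1 ≤ i := by
          rcases hyp with h | ⟨h, _⟩
          · exact le_of_lt h
          · exact le_of_eq h
        have hySle : Snat O T y1 ≤ O y1 + y3 * T y1 := by
          by_contra hlt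
          push_neg at hlt
          obtain ⟨q', hq'⟩ := Snat_arr O T y1
          have hstep : O y1 + y3 * T y1 + T y1 ≤ Snat O T y1 :=
            arr_step hyT ⟨y3, rfl⟩ ⟨q', hq'⟩ hlt
          have hSS : Snat O T y1 ≤ Snat O T i :=
            Snat_mono O T hyi (fun kk hk => hT kk (by omega))
          have hdl : O y1 + y3 * T y1 + D y1 ≤ t := by
            have := hD y1 hy1
            omega
          have hmet := hB (y1, y2, y3) hy1 hy2 (by dsimp only; omega)
          dsimp only at hmet
          have hmon := work_mono σ (y1, y2, y3) hdl
          have hwa := hya.2.2.2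
          dsimp only at hwa
          omega
        have hwy : work σ (shiftT P T (y1, y2, y3)) (t + P) = work σ (y1, y2, y3) t :=
          work_shift hσ P _ t (hdvdP y1 hy1) (fun u hu => (IH u hu).2 _ hy1 hy2 hySle)
        refine ⟨hierHp_shift hyp, hya.1, hya.2.1, ?_, ?_⟩
        · show O y1 + (y3 + P / T y1) * T y1 ≤ t + P
          obtain ⟨p', hp''⟩ := hdvdP y1 hy1
          have hPT' : P / T y1 = p' := by rw [hp'']; exact Nat.mul_div_cancel_left p' hyT
          have h4 : (y3 + P / T y1) * T y1 = y3 * T y1 + P := by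
            rw [hPT', add_mul, hp'']; ring
          have h5 := hya.2.2.1
          dsimp only at h5
          omega
        · show work σ (shiftT P T (y1, y2, y3)) (t + P) < C y1 y2
          rw [hwy]
          exact hya.2.2.2
      refine ⟨s.image (shiftT P T), ?_, ?_⟩
      · intro x hx
        rw [Finset.mem_image] at hx
        obtain ⟨y, hy, rfl⟩ := hx
        exact key y hy
      · rw [Finset.card_image_of_injective _ (shiftT_injective P T)]
        exact hcard
    · rintro ⟨s, hs, hcard⟩
      have key : ∀ y ∈ s, shiftT P T (y.1, y.2.1, y.2.2 - P / T y.1) = y ∧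
          (hierHp (y.1, y.2.1, y.2.2 - P / T y.1) (i, jj, k) ∧
           active n v O T (fun th => C th.1 th.2.1) σ (y.1, y.2.1, y.2.2 - P / T y.1) t) := by
        rintro ⟨y1, y2, y3⟩ hy
        obtain ⟨hyp, hya⟩ := hs _ hy
        dsimp only
        have hy1 : y1 < n := hya.1
        have hy2 : y2 < v y1 := hya.2.1
        have hyT : 0 < T y1 := hT y1 hy1
        have hyi : y1 ≤ i := by
          rcases hyp with h | ⟨h, _⟩
          · exact le_of_lt h
          · exact le_of_eq h
        obtain ⟨q', hq'⟩ := Snat_arr O T y1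
        obtain ⟨p', hp''⟩ := hdvdP y1 hy1
        have hPT' : P / T y1 = p' := by rw [hp'']; exact Nat.mul_div_cancel_left p' hyT
        have hpT' : p' * T y1 = P := by rw [hp'']; ring
        have hSS : Snat O T y1 ≤ Snat O T i :=
          Snat_mono O T hyi (fun kk hk => hT kk (by omega))
        have harrY := hya.2.2.1
        dsimp only at harrY
        have hworkY := hya.2.2.2
        dsimp only at hworkY
        have hSy : Snat O T y1 + P ≤ O y1 + y3 * T y1 := by
          by_contra hlt
          push_neg at hlt
          have hstep : O y1 + y3 * T y1 + T y1 ≤ Snat O T y1 + P :=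
            arr_step hyT ⟨y3, rfl⟩ ⟨q' + p', by rw [hq', ← hpT']; ring⟩ hlt
          have hdl : O y1 + y3 * T y1 + D y1 ≤ t + P := by
            have := hD y1 hy1
            omega
          have hmet := hB (y1, y2, y3) hy1 hy2 (by dsimp only; omega)
          dsimp only at hmet
          have hmon := work_mono σ (y1, y2, y3) hdl
          omega
        have hky : q' + p' ≤ y3 := by
          by_contra hh
          push_neg at hh
          have h5 : y3 * T y1 + T y1 ≤ (q' + p') * T y1 := by
            have h5a := Nat.mul_le_mul_right (T y1) (show y3 + 1 ≤ q' + p' by omega)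
            have h6 : (y3 + 1) * T y1 = y3 * T y1 + T y1 := by ring
            omega
          have h7 : (q' + p') * T y1 = q' * T y1 + P := by rw [add_mul, hpT']
          omega
        have hpy : p' ≤ y3 := by omega
        have hsh : shiftT P T (y1, y2, y3 - P / T y1) = (y1, y2, y3) := by
          simp only [shiftT]
          have h8 : y3 - P / T y1 + P / T y1 = y3 := by rw [hPT']; omega
          rw [h8]
        have hySarr : Snat O T y1 ≤ O y1 + (y3 - P / T y1) * T y1 := by
          rw [hPT', hq']
          have h9 := Nat.mul_le_mul_right (T y1) (show q' ≤ y3 - p' by omega)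
          omega
        have hwy : work σ (y1, y2, y3) (t + P) = work σ (y1, y2, y3 - P / T y1) t := by
          have h10 := work_shift hσ P (y1, y2, y3 - P / T y1) t (hdvdP y1 hy1)
            (fun u hu => (IH u hu).2 _ hy1 hy2 hySarr)
          rw [hsh] at h10
          exact h10
        refine ⟨hsh, ?_, ?_⟩
        · rcases hyp with h | ⟨h, hrest⟩
          · exact Or.inl h
          · refine Or.inr ⟨h, ?_⟩
            rcases hrest with h' | ⟨h', hlt⟩
            · exact Or.inl h'
            · refine Or.inr ⟨h', ?_⟩
              show y3 - P / T y1 < k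
              have hy1i : y1 = i := h
              have hlt' : y3 < k + P / T i := hlt
              have hp'p : p' = p := by rw [hy1i] at hPT'; omega
              rw [hy1i, hPT]
              rw [hPT] at hlt'
              omega
        · refine ⟨hy1, hy2, ?_, ?_⟩
          · show O y1 + (y3 - P / T y1) * T y1 ≤ t
            rw [hPT']
            have h11 : (y3 - p') * T y1 = y3 * T y1 - p' * T y1 := Nat.sub_mul y3 p' (T y1)
            have h12 := Nat.mul_le_mul_right (T y1) hpy
            omega
          · show work σ (y1, y2, y3 - P / T y1) t < C y1 y2
            rw [← hwy]
            exact hworkY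
      refine ⟨s.image (fun y => (y.1, y.2.1, y.2.2 - P / T y.1)), ?_, ?_⟩
      · intro x hx
        rw [Finset.mem_image] at hx
        obtain ⟨y, hy, rfl⟩ := hx
        exact (key y hy).2
      · rw [Finset.card_image_of_injOn]
        · exact hcard
        · intro x hx y hy hxy
          exact ((key x hx).1.symm.trans (congrArg (shiftT P T) hxy)).trans (key y hy).1
  obtain ⟨i, jj, k⟩ := th0
  dsimp only at h01 h02 ⊢
  have hdl := (IND (O i + k * T i + D i)).1 (i, jj, k) h01 h02 (by dsimp only; omega)
  dsimp only at hdl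
  have hminle := predictable hσ hσ' hc (O i + k * T i + D i) (i, jj, k)
  have hle := work_le hσ' (i, jj, k) (O i + k * T i + D i)
  have hcth := hc (i, jj, k)
  dsimp only at hcth
  rw [hdl, min_eq_left hcth] at hminle
  omega

end HierTest
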